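/- arXiv:2406.18419 — 3 statements merged into one kernel-verified Lean document; each statement's English description precedes it below -/
import Mathlib

section
/- Define the rational number A(n) := 2^{n^2} · ((2n-1)!!/n!) · ∏_{i=1}^{2n-1} (2i)!/(n+i)!. Then for every integer n ≥ 1, A(n) · A(n+2) · 27(3n+1)(3n+2)^2(3n+4)^2(3n+5) = A(n+1)^2 · 256(2n+3)^2(4n+1)(4n+3)^2(4n+5); equivalently A(n)A(n+2)/A(n+1)^2 = 256(2n+3)^2(4n+1)(4n+3)^2(4n+5) / (27(3n+1)(3n+2)^2(3n+4)^2(3n+5)). -/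
/-- The product formula for the number of domino tilings of the truncated Aztec diamond
`TAD_{2n-1}` (equivalently, for the number of vertical-bone-free trimer tilings of the
`(3n,3n)`-benzel): `A(n) = 2^{n²} · ((2n-1)!!/n!) · ∏_{i=1}^{2n-1} (2i)!/(n+i)!`. -/
noncomputable def benzelA (n : ℕ) : ℚ :=
  2 ^ (n ^ 2) * ((Nat.doubleFactorial (2 * n - 1) : ℚ) / (Nat.factorial n : ℚ)) *
    ∏ i ∈ Finset.Icc 1 (2 * n - 1),
      (Nat.factorial (2 * i) : ℚ) / (Nat.factorial (n + i) : ℚ)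

open Finset Nat

/-!
Put `r(n) = 2^{2n+1} (2n+1) n! (4n)! (4n+2)! / ((3n)! (3n+1)! (3n+2)!)`. Comparing consecutive
factors of the product formula gives `A(n+1) = A(n) r(n)`, so
`A(n) A(n+2) / A(n+1)² = r(n+1) / r(n)`, and this quotient of factorials collapses to the
stated rational function of `n`.
-/

theorem prod_Icc_one_eq_prod_range {M : Type*} [CommMonoid M] (f : ℕ → M) (k : ℕ) :
    ∏ i ∈ Icc 1 k, f i = ∏ i ∈ range k, f (i + 1) := by
  induction k with
  | zero => simp
  | succ k ih => rw [prod_Icc_succ_top (by omega), prod_range_succ, ih]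

-- Over `range (2 * n)` the products pick up the harmless factors `0! = 1` and `n!`,
-- and the truncated bound `2 * n - 1` disappears.
theorem benzelA_eq_prod_range (n : ℕ) :
    benzelA n = 2 ^ (n ^ 2) * (2 * n - 1)‼ * (∏ i ∈ range (2 * n), ((2 * i)! : ℚ)) /
      ∏ i ∈ range (2 * n), ((n + i)! : ℚ) := by
  rcases n with _ | n
  · simp [benzelA]
  · rw [benzelA, prod_div_distrib, prod_Icc_one_eq_prod_range, prod_Icc_one_eq_prod_range,
      show 2 * (n + 1) - 1 = 2 * n + 1 by omega, show 2 * (n + 1) = 2 * n + 1 + 1 by ring,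
      prod_range_succ' (fun i => ((2 * i)! : ℚ)),
      prod_range_succ' (fun i => ((n + 1 + i)! : ℚ))]
    simp only [mul_zero, add_zero, factorial_zero, cast_one, mul_one]
    ring

theorem prod_range_factorial_two_mul_succ (n : ℕ) :
    ∏ i ∈ range (2 * (n + 1)), ((2 * i)! : ℚ) =
      (∏ i ∈ range (2 * n), ((2 * i)! : ℚ)) * (4 * n)! * (4 * n + 2)! := by
  rw [show 2 * (n + 1) = 2 * n + 1 + 1 by ring, prod_range_succ, prod_range_succ,
    show 2 * (2 * n) = 4 * n by ring, show 2 * (2 * n + 1) = 4 * n + 2 by ring]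

theorem prod_range_factorial_add_succ (n : ℕ) :
    (∏ i ∈ range (2 * (n + 1)), ((n + 1 + i)! : ℚ)) * n ! =
      (∏ i ∈ range (2 * n), ((n + i)! : ℚ)) * (3 * n)! * (3 * n + 1)! * (3 * n + 2)! := by
  have h := prod_range_succ' (fun i => ((n + i)! : ℚ)) (2 * (n + 1))
  simp only [add_zero, add_assoc, add_comm 1] at h ⊢
  rw [← h, show 2 * (n + 1) + 1 = 2 * n + 1 + 1 + 1 by ring, prod_range_succ, prod_range_succ,
    prod_range_succ]
  ring_nf

noncomputable def benzelRatio (n : ℕ) : ℚ :=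
  2 ^ (2 * n + 1) * (2 * n + 1) * n ! * (4 * n)! * (4 * n + 2)! /
    ((3 * n)! * (3 * n + 1)! * (3 * n + 2)!)

theorem benzelA_succ (n : ℕ) : benzelA (n + 1) = benzelA n * benzelRatio n := by
  have hD := prod_range_factorial_add_succ n
  rw [benzelA_eq_prod_range, benzelA_eq_prod_range, benzelRatio, prod_range_factorial_two_mul_succ,
    show 2 * (n + 1) - 1 = 2 * n + 1 by omega, doubleFactorial_add_one,
    show (n + 1) ^ 2 = n ^ 2 + (2 * n + 1) by ring, pow_add]
  field_simp
  push_cast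
  linear_combination (2 * (n : ℚ) + 1) * (2 * n - 1)‼ * hD.symm

theorem benzelRatio_succ (n : ℕ) :
    benzelRatio (n + 1) *
        (27 * (3 * (n : ℚ) + 1) * (3 * n + 2) ^ 2 * (3 * n + 4) ^ 2 * (3 * n + 5)) =
      benzelRatio n *
        (256 * (2 * (n : ℚ) + 3) ^ 2 * (4 * n + 1) * (4 * n + 3) ^ 2 * (4 * n + 5)) := by
  simp only [benzelRatio, show 4 * (n + 1) = 4 * n + 1 + 1 + 1 + 1 by ring,
    show 3 * (n + 1) = 3 * n + 1 + 1 + 1 by ring, factorial_succ]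
  push_cast
  field_simp
  ring

theorem benzelA_recurrence_general (n : ℕ) :
    benzelA n * benzelA (n + 2) *
        (27 * (3 * (n : ℚ) + 1) * (3 * n + 2) ^ 2 * (3 * n + 4) ^ 2 * (3 * n + 5)) =
      benzelA (n + 1) ^ 2 *
        (256 * (2 * (n : ℚ) + 3) ^ 2 * (4 * n + 1) * (4 * n + 3) ^ 2 * (4 * n + 5)) := by
  rw [benzelA_succ (n + 1), benzelA_succ n]
  linear_combination (benzelA n ^ 2 * benzelRatio n) * benzelRatio_succ n

/-- Propp's conjectured recurrence for the `(3n,3n)`-benzel numbers: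
`A(n)·A(n+2)·27(3n+1)(3n+2)²(3n+4)²(3n+5) = A(n+1)²·256(2n+3)²(4n+1)(4n+3)²(4n+5)`,
equivalently `A(n)A(n+2)/A(n+1)² = 256(2n+3)²(4n+1)(4n+3)²(4n+5)/(27(3n+1)(3n+2)²(3n+4)²(3n+5))`. -/
theorem benzelA_recurrence (n : ℕ) (hn : 1 ≤ n) :
    benzelA n * benzelA (n + 2) *
        (27 * (3 * (n : ℚ) + 1) * (3 * n + 2) ^ 2 * (3 * n + 4) ^ 2 * (3 * n + 5)) =
      benzelA (n + 1) ^ 2 *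
        (256 * (2 * (n : ℚ) + 3) ^ 2 * (4 * n + 1) * (4 * n + 3) ^ 2 * (4 * n + 5)) :=
  benzelA_recurrence_general n
end

section
/- With the notation in the context, for all strictly increasing lists of positive integers 𝐥 = (l_1,…,l_m) and 𝐪 = (q_1,…,q_n) (m, n ≥ 0, with l_m := 0 if m = 0) and every integer x ≥ 0, the following identity of rational numbers holds: P_{𝐥,𝐪}(x+1) · (2x+2l_m-m+n+2)! · (2x+2l_m-m+n+3)! · ∏_{i=1}^{m} (x+l_m-l_i+1) · ∏_{i=1}^{n} (x+l_m-q_i-m+n+2) = P_{𝐥,𝐪}(x) · (2x+2l_m+2)! · (2x+2l_m-2m+2n+3)! · ∏_{i=1}^{m} (x+l_m+l_i-m+n+2) · ∏_{i=1}^{n} (x+l_m+q_i+1). -/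
/-!
Put `y = x + l_m - m ∈ ℕ`. Then `P(x) = c · B(y) · L · Q`, where in the double products `L` and `Q`
the inner product over `j` telescopes under `x ↦ x + 1`, leaving only the factors at the ends of the
range of `j`; those at `j = i` are Pochhammer symbols in `y`. Every factor of `B` has an explicit
shift ratio as well: the product of `(y+i)_m / (y+i+1/2)_m` telescopes in `i`, the factors
`(2y+n+i+2)_{n+i-1}` gain two linear factors each, and the pair `⟨y+2, y+n⟩⟨y+3/2, y+(2n+1)/2⟩`
changes by `(2y+n+4)_n / (2y+3)_n`, by induction on `n` in steps of two. After cancellation what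
remains is an identity between Pochhammer symbols and factorials whose two sides change by the
same rational factor when `m` increases by one.
-/

open Finset

/-- The Pochhammer symbol `(a)_k = a(a+1)⋯(a+k-1)`, with `(a)_0 = 1`. -/
def pochQ (a : ℚ) (k : ℕ) : ℚ := ∏ i ∈ Finset.range k, (a + i)

/-- The product `⟨a, a+k⟩ = ∏_{i=0}^{⌊k/2⌋} (a+i)_{k+1-2i}` for `k ≥ 0`, and `1` for `k < 0`. -/
def angleQ (a : ℚ) (k : ℤ) : ℚ :=
  if k < 0 then 1
  else ∏ i ∈ Finset.range (k.toNat / 2 + 1), pochQ (a + i) (k.toNat + 1 - 2 * i)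

/-- The monic polynomial `B_{m,n}(x)`. -/
def polB (m n : ℕ) (x : ℚ) : ℚ :=
  ((2 : ℚ) ^ (m * n + m * (m - 1) / 2))⁻¹ *
    pochQ (x + n + 1) m * pochQ (x + n + 2) m *
    angleQ (x + 2) ((n : ℤ) - 2) * angleQ (x + 3 / 2) ((n : ℤ) - 1) *
    (∏ i ∈ Finset.Icc 1 n, pochQ (x + i) m / pochQ (x + i + 1 / 2) m) *
    ∏ i ∈ Finset.Icc 1 m, pochQ (2 * x + n + i + 2) (n + i - 1)

/-- The constant `c_{𝐥,𝐪}` (here `𝐥` and `𝐪` are given as functions, the lists being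
`l 1 < l 2 < ⋯ < l m` and `q 1 < q 2 < ⋯ < q n`). -/
def constC (m n : ℕ) (l q : ℕ → ℕ) : ℚ :=
  (2 : ℚ) ^ ((((n : ℤ) - m) * ((n : ℤ) - m - 1)) / 2 - m) *
    (∏ i ∈ Finset.Icc 1 m, ((Nat.factorial (2 * l i) : ℚ))⁻¹) *
    (∏ i ∈ Finset.Icc 1 n, ((Nat.factorial (2 * q i - 1) : ℚ))⁻¹) *
    (∏ i ∈ Finset.Icc 1 m, ∏ j ∈ Finset.Icc (i + 1) m, ((l j : ℚ) - (l i : ℚ))) *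
    (∏ i ∈ Finset.Icc 1 n, ∏ j ∈ Finset.Icc (i + 1) n, ((q j : ℚ) - (q i : ℚ))) /
    (∏ i ∈ Finset.Icc 1 m, ∏ j ∈ Finset.Icc 1 n, ((l i : ℚ) + (q j : ℚ)))

/-- The polynomial `P_{𝐥,𝐪}(x)`; the parameter `lm` stands for `l_m` (which is `0` if `m = 0`). -/
def polP (m n : ℕ) (l q : ℕ → ℕ) (lm : ℕ) (x : ℚ) : ℚ :=
  constC m n l q * polB m n (x + lm - m) *
    (∏ i ∈ Finset.Icc 1 m, ∏ j ∈ Finset.Icc i (l i - 1),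
      ((x + lm - j) * (x + lm - m + n + j + 2))) *
    ∏ i ∈ Finset.Icc 1 n, ∏ j ∈ Finset.Icc i (q i - 1),
      ((x + lm - m + n - j + 1) * (x + lm + j + 1))

open scoped Nat

theorem Finset.prod_Ico_add_one_mul {M : Type*} [CommMonoid M] (f : ℕ → M) {a b : ℕ}
    (hab : a ≤ b) : (∏ j ∈ Ico a b, f (j + 1)) * f a = (∏ j ∈ Ico a b, f j) * f b := by
  rw [prod_Ico_add', mul_comm, ← prod_eq_prod_Ico_succ_bot (Nat.lt_succ_of_le hab),
    prod_Ico_succ_top hab]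

theorem Finset.prod_Icc_one_add_one_mul {M : Type*} [CommMonoid M] (f : ℕ → M) (n : ℕ) :
    (∏ i ∈ Icc 1 n, f (i + 1)) * f 1 = (∏ i ∈ Icc 1 n, f i) * f (n + 1) := by
  rw [← Ico_add_one_right_eq_Icc]
  exact prod_Ico_add_one_mul f (by omega)

theorem le_apply_of_strictMonoOn {m : ℕ} {l : ℕ → ℕ}
    (hl : ∀ i j, 1 ≤ i → i < j → j ≤ m → l i < l j) (hpos : ∀ i, 1 ≤ i → i ≤ m → 1 ≤ l i) :
    ∀ i, 1 ≤ i → i ≤ m → i ≤ l i := by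
  intro i hi him
  induction i, hi using Nat.le_induction with
  | base => exact hpos 1 le_rfl him
  | succ i hi ih => exact (ih (by omega)).trans_lt (hl i (i + 1) hi (by omega) him)

theorem pochQ_zero (a : ℚ) : pochQ a 0 = 1 := rfl

theorem pochQ_succ (a : ℚ) (k : ℕ) : pochQ a (k + 1) = pochQ a k * (a + k) :=
  prod_range_succ _ _

theorem pochQ_succ' (a : ℚ) (k : ℕ) : pochQ a (k + 1) = a * pochQ (a + 1) k := by
  rw [pochQ, prod_range_succ', pochQ, Nat.cast_zero, add_zero, mul_comm]
  exact congrArg (a * ·) (prod_congr rfl fun _ _ => by push_cast; ring)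

theorem pochQ_add_one_mul (a : ℚ) (k : ℕ) : pochQ (a + 1) k * a = pochQ a k * (a + k) := by
  rw [mul_comm, ← pochQ_succ', pochQ_succ]

theorem pochQ_add_two_mul (a : ℚ) (k : ℕ) :
    pochQ (a + 2) k * (a * (a + 1)) = pochQ a k * ((a + k) * (a + k + 1)) := by
  have h := pochQ_add_one_mul (a + 1) k
  rw [add_assoc, one_add_one_eq_two] at h
  linear_combination a * h + (a + 1 + k) * pochQ_add_one_mul a k

theorem pochQ_pos {a : ℚ} (ha : 0 < a) (k : ℕ) : 0 < pochQ a k :=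
  prod_pos fun _ _ => by positivity

theorem pochQ_ne_zero {a : ℚ} (ha : 0 < a) (k : ℕ) : pochQ a k ≠ 0 :=
  (pochQ_pos ha k).ne'

theorem prod_Icc_one_add_eq_pochQ (a : ℚ) (k : ℕ) :
    ∏ i ∈ Icc 1 k, (a + i) = pochQ (a + 1) k := by
  rw [← Ico_add_one_right_eq_Icc, prod_Ico_eq_prod_range, pochQ, add_tsub_cancel_right]
  exact prod_congr rfl fun i _ => by push_cast; ring

theorem prod_Icc_one_sub_eq_pochQ (a : ℚ) (k : ℕ) :
    ∏ i ∈ Icc 1 k, (a - i) = pochQ (a - k) k := by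
  rw [← Ico_add_one_right_eq_Icc, prod_Ico_eq_prod_range, pochQ, add_tsub_cancel_right,
    ← prod_range_reflect]
  refine prod_congr rfl fun i hi => ?_
  have h : ((1 + (k - 1 - i) : ℕ) : ℚ) = k - i := by
    rw [eq_sub_iff_add_eq]; norm_cast; have := mem_range.mp hi; omega
  rw [h]; ring

theorem factorial_mul_pochQ (k m : ℕ) : (k ! : ℚ) * pochQ (k + 1) m = (k + m)! := by
  induction m with
  | zero => simp [pochQ_zero]
  | succ m ih =>
    rw [pochQ_succ, ← mul_assoc, ih, ← add_assoc, Nat.factorial_succ]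
    push_cast; ring

theorem angleQ_of_neg (a : ℚ) {k : ℤ} (hk : k < 0) : angleQ a k = 1 := if_pos hk

theorem angleQ_natCast (a : ℚ) (k : ℕ) :
    angleQ a k = pochQ a (k + 1) * angleQ (a + 1) (k - 2) := by
  rw [angleQ, if_neg (by omega), Int.toNat_natCast, prod_range_succ', mul_comm]
  simp only [Nat.cast_zero, add_zero, mul_zero, Nat.sub_zero]
  congr 1
  rcases lt_or_ge k 2 with hk | hk
  · rw [angleQ_of_neg _ (by omega), Nat.div_eq_of_lt hk, prod_range_zero]
  · obtain ⟨j, rfl⟩ := Nat.exists_eq_add_of_le' hk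
    rw [angleQ, if_neg (by omega), show ((j + 2 : ℕ) : ℤ) - 2 = j by push_cast; ring,
      Int.toNat_natCast, show (j + 2) / 2 = j / 2 + 1 by omega]
    refine prod_congr rfl fun i _ => ?_
    rw [show j + 2 + 1 - 2 * (i + 1) = j + 1 - 2 * i by omega]
    push_cast; ring_nf

theorem angleQ_zero (a : ℚ) : angleQ a 0 = a := by
  simpa [angleQ_of_neg, pochQ_succ, pochQ_zero] using angleQ_natCast a 0

theorem angleQ_pair_add_one_mul (n : ℕ) (a : ℚ) :
    angleQ (a + 1 + 2) (n - 2) * angleQ (a + 1 + 3 / 2) (n - 1) * pochQ (2 * a + 3) n =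
      angleQ (a + 2) (n - 2) * angleQ (a + 3 / 2) (n - 1) * pochQ (2 * a + n + 4) n := by
  induction n using Nat.twoStepInduction generalizing a with
  | zero => simp [angleQ_of_neg, pochQ_zero]
  | one =>
    simp only [Nat.cast_one, sub_self, angleQ_of_neg _ (by norm_num : (1 : ℤ) - 2 < 0),
      angleQ_zero, pochQ_succ, pochQ_zero]
    ring
  | more n ih _ =>
    have hn2 : ((n + 2 : ℕ) : ℤ) - 2 = n := by push_cast; ring
    have hn1 : ((n + 2 : ℕ) : ℤ) - 1 = (n + 1 : ℕ) := by push_cast; ring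
    have hn : ((n + 1 : ℕ) : ℤ) - 2 = n - 1 := by push_cast; ring
    rw [hn2, hn1, angleQ_natCast, angleQ_natCast, angleQ_natCast (a + 2),
      angleQ_natCast (a + 3 / 2), hn, pochQ_succ (a + 1 + 2), pochQ_succ' (a + 2),
      pochQ_succ (a + 1 + 3 / 2), pochQ_succ' (a + 3 / 2), pochQ_succ' (2 * a + 3),
      pochQ_succ' (2 * a + 3 + 1), pochQ_succ (2 * a + (n + 2 : ℕ) + 4),
      pochQ_succ (2 * a + (n + 2 : ℕ) + 4)]
    push_cast
    linear_combination (norm := ring_nf)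
      (pochQ (a + 3) n * pochQ (a + 5 / 2) (n + 1) * (a + n + 3) * (a + n + 7 / 2) *
        (2 * a + 3) * (2 * a + 4)) * ih (a + 1)

theorem prod_pochQ_div_add_one_mul {x : ℚ} (hx : 0 ≤ x) (m n : ℕ) :
    (∏ i ∈ Icc 1 n, pochQ (x + 1 + i) m / pochQ (x + 1 + i + 1 / 2) m) *
        (pochQ (x + 1) m * pochQ (x + n + 3 / 2) m) =
      (∏ i ∈ Icc 1 n, pochQ (x + i) m / pochQ (x + i + 1 / 2) m) *
        (pochQ (x + n + 1) m * pochQ (x + 3 / 2) m) := by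
  have ht := prod_Icc_one_add_one_mul (fun i : ℕ => pochQ (x + i) m / pochQ (x + i + 1 / 2) m) n
  have hshift : ∀ i : ℕ, x + 1 + (i : ℚ) = x + (i + 1) := fun i => by ring
  have h1 : pochQ (x + 1) m / pochQ (x + 1 + 1 / 2) m * pochQ (x + 3 / 2) m = pochQ (x + 1) m := by
    rw [show x + 1 + 1 / 2 = x + 3 / 2 by ring, div_mul_cancel₀ _ (pochQ_ne_zero (by positivity) m)]
  have hn : pochQ (x + (n + 1)) m / pochQ (x + (n + 1) + 1 / 2) m * pochQ (x + n + 3 / 2) m =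
      pochQ (x + n + 1) m := by
    rw [show x + (n + 1) + 1 / 2 = x + n + 3 / 2 by ring,
      div_mul_cancel₀ _ (pochQ_ne_zero (by positivity) m), ← add_assoc]
  push_cast at ht
  simp only [hshift]
  rw [← h1, ← hn]
  linear_combination (pochQ (x + 3 / 2) m * pochQ (x + n + 3 / 2) m) * ht

theorem prod_pochQ_add_two_mul (x : ℚ) (m n : ℕ) :
    (∏ i ∈ Icc 1 m, pochQ (2 * (x + 1) + n + i + 2) (n + i - 1)) *
        ∏ i ∈ Icc 1 m, ((2 * x + n + i + 2) * (2 * x + n + i + 3)) =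
      (∏ i ∈ Icc 1 m, pochQ (2 * x + n + i + 2) (n + i - 1)) *
        ∏ i ∈ Icc 1 m, ((2 * x + 2 * n + 2 * i + 1) * (2 * x + 2 * n + 2 * i + 2)) := by
  rw [← prod_mul_distrib, ← prod_mul_distrib]
  refine prod_congr rfl fun i hi => ?_
  have h := pochQ_add_two_mul (2 * x + n + i + 2) (n + i - 1)
  rw [Nat.cast_sub (by have := (mem_Icc.mp hi).1; omega)] at h
  push_cast at h
  linear_combination (norm := ring_nf) h

theorem polB_add_one_mul {x : ℚ} (hx : 0 ≤ x) (m n : ℕ) :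
    polB m n (x + 1) * (pochQ (2 * x + 3) n * pochQ (x + 1) m * pochQ (x + n + 3 / 2) m *
        ∏ i ∈ Icc 1 m, ((2 * x + n + i + 2) * (2 * x + n + i + 3))) =
      polB m n x * (pochQ (2 * x + n + 4) n * pochQ (x + n + 3) m * pochQ (x + 3 / 2) m *
        ∏ i ∈ Icc 1 m, ((2 * x + 2 * n + 2 * i + 1) * (2 * x + 2 * n + 2 * i + 2))) := by
  have hX : pochQ (x + 1 + n + 1) m * pochQ (x + 1 + n + 2) m * pochQ (x + n + 1) m =
      pochQ (x + n + 1) m * pochQ (x + n + 2) m * pochQ (x + n + 3) m := by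
    ring_nf
  refine mul_right_cancel₀ (pochQ_ne_zero (by positivity : 0 < x + n + 1) m) ?_
  have key := congr((2 ^ (m * n + m * (m - 1) / 2) : ℚ)⁻¹ * $hX * $(angleQ_pair_add_one_mul n x) *
    $(prod_pochQ_div_add_one_mul hx m n) * $(prod_pochQ_add_two_mul x m n))
  unfold polB
  linear_combination key

theorem pochQ_factorial_identity (z n m : ℕ) :
    pochQ (2 * z + n + 4) n * pochQ (z + 3 / 2) m *
        (∏ i ∈ Icc 1 m, ((2 * z + 2 * n + 2 * i + 1) * (2 * z + 2 * n + 2 * i + 2) : ℚ)) *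
        (2 * z + m + n + 2)! * (2 * z + m + n + 3)! * pochQ (z + 2) n * (z + m + 1)! =
      pochQ (2 * z + 3) n * pochQ (z + n + 3 / 2) m *
        (∏ i ∈ Icc 1 m, ((2 * z + n + i + 2) * (2 * z + n + i + 3) : ℚ)) *
        (2 * z + 2 * m + 2)! * (2 * z + 2 * n + 3)! * (z + m + n + 1)! := by
  induction m with
  | zero =>
    have h1 := factorial_mul_pochQ (2 * z + 2) n
    have h2 := factorial_mul_pochQ (2 * z + n + 3) n
    have h3 := factorial_mul_pochQ (z + 1) n
    push_cast at h1 h2 h3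
    simp only [pochQ_zero, Icc_eq_empty_of_lt zero_lt_one, prod_empty, mul_one, add_zero, mul_zero]
    linear_combination (norm := ring_nf) -((2 * z + n + 3)! * pochQ (2 * z + n + 4) n *
      (z + 1)! * pochQ (z + 2) n) * h1 + ((2 * z + 2)! * pochQ (2 * z + 3) n) *
      ((z + 1)! * pochQ (z + 2) n * h2 + (2 * z + 2 * n + 3)! * h3)
  | succ m ih =>
    have hfac (k : ℕ) : ((k + 1)! : ℚ) = (k + 1) * k ! := by
      rw [Nat.factorial_succ]; push_cast; ring
    rw [show 2 * z + (m + 1) + n + 2 = 2 * z + m + n + 2 + 1 by ring,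
      show 2 * z + (m + 1) + n + 3 = 2 * z + m + n + 3 + 1 by ring,
      show 2 * z + 2 * (m + 1) + 2 = 2 * z + 2 * m + 2 + 1 + 1 by ring,
      show z + (m + 1) + 1 = z + m + 1 + 1 by ring,
      show z + (m + 1) + n + 1 = z + m + n + 1 + 1 by ring,
      hfac (2 * z + m + n + 2), hfac (2 * z + m + n + 3), hfac (2 * z + 2 * m + 2 + 1),
      hfac (2 * z + 2 * m + 2), hfac (z + m + 1), hfac (z + m + n + 1), pochQ_succ, pochQ_succ,
      prod_Icc_succ_top (by omega), prod_Icc_succ_top (by omega)]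
    push_cast
    linear_combination ((z + 3 / 2 + m) * (2 * z + 2 * n + 2 * (m + 1) + 1) *
      (2 * z + 2 * n + 2 * (m + 1) + 2) * (2 * z + m + n + 2 + 1) * (2 * z + m + n + 3 + 1) *
      (z + m + 1 + 1)) * ih

theorem polB_add_one_mul_factorial (z m n : ℕ) :
    polB m n (z + 1) * (2 * z + m + n + 2)! * (2 * z + m + n + 3)! * pochQ (z + 1) m *
        pochQ (z + 2) n =
      polB m n z * (2 * z + 2 * m + 2)! * (2 * z + 2 * n + 3)! * pochQ (z + n + 3) m *
        pochQ (z + m + 2) n := by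
  have hV := factorial_mul_pochQ (z + m + 1) n
  rw [show ((z + m + 1 : ℕ) : ℚ) + 1 = z + m + 2 by push_cast; ring,
    show z + m + 1 + n = z + m + n + 1 by ring] at hV
  have hR : pochQ (2 * z + n + 4) n * pochQ (z + 3 / 2) m *
        (∏ i ∈ Icc 1 m, ((2 * z + 2 * n + 2 * i + 1) * (2 * z + 2 * n + 2 * i + 2) : ℚ)) *
        (2 * z + m + n + 2)! * (2 * z + m + n + 3)! * pochQ (z + 2) n =
      pochQ (2 * z + 3) n * pochQ (z + n + 3 / 2) m *
        (∏ i ∈ Icc 1 m, ((2 * z + n + i + 2) * (2 * z + n + i + 3) : ℚ)) *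
        (2 * z + 2 * m + 2)! * (2 * z + 2 * n + 3)! * pochQ (z + m + 2) n := by
    have h := pochQ_factorial_identity z n m
    rw [← hV] at h
    refine mul_right_cancel₀ (Nat.cast_ne_zero.mpr (z + m + 1).factorial_ne_zero) ?_
    linear_combination h
  have hD : pochQ (2 * z + 3) n * pochQ (z + n + 3 / 2) m *
      (∏ i ∈ Icc 1 m, ((2 * z + n + i + 2) * (2 * z + n + i + 3) : ℚ)) *
      (pochQ (2 * z + n + 4) n * pochQ (z + 3 / 2) m *
      (∏ i ∈ Icc 1 m, ((2 * z + 2 * n + 2 * i + 1) * (2 * z + 2 * n + 2 * i + 2) : ℚ))) ≠ 0 := by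
    apply_rules [mul_ne_zero, pochQ_ne_zero, prod_ne_zero_iff.mpr] <;> intros <;> positivity
  refine mul_right_cancel₀ hD ?_
  linear_combination congr($(polB_add_one_mul (Nat.cast_nonneg z) m n) * $hR)

def shiftedProd {R : Type*} [CommRing R] (s : ℕ → ℕ) (k : ℕ) (a b : R) : R :=
  ∏ i ∈ Icc 1 k, ∏ j ∈ Icc i (s i - 1), ((a - j) * (b + j))

theorem shiftedProd_add_one_mul {R : Type*} [CommRing R] (a b : R) {s : ℕ → ℕ} {k : ℕ}
    (hs : ∀ i, 1 ≤ i → i ≤ k → i ≤ s i) :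
    shiftedProd s k (a + 1) (b + 1) * (∏ i ∈ Icc 1 k, (a + 1 - s i)) * ∏ i ∈ Icc 1 k, (b + i) =
      shiftedProd s k a b * (∏ i ∈ Icc 1 k, (a + 1 - i)) * ∏ i ∈ Icc 1 k, (b + s i) := by
  simp only [shiftedProd, ← prod_mul_distrib]
  refine prod_congr rfl fun i hi => ?_
  obtain ⟨hi1, hik⟩ := mem_Icc.mp hi
  have hIcc : Icc i (s i - 1) = Ico i (s i) := by ext j; simp only [mem_Icc, mem_Ico]; omega
  have ta : (∏ j ∈ Ico i (s i), (a - j)) * (a + 1 - i) =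
      (∏ j ∈ Ico i (s i), (a + 1 - j)) * (a + 1 - s i) := by
    convert prod_Ico_add_one_mul (fun j : ℕ => a + 1 - j) (hs i hi1 hik) using 3; push_cast; ring
  have tb : (∏ j ∈ Ico i (s i), (b + 1 + j)) * (b + i) =
      (∏ j ∈ Ico i (s i), (b + j)) * (b + s i) := by
    convert prod_Ico_add_one_mul (fun j : ℕ => b + j) (hs i hi1 hik) using 3; push_cast; ring
  rw [hIcc, prod_mul_distrib, prod_mul_distrib]
  linear_combination -((∏ j ∈ Ico i (s i), (b + 1 + j)) * (b + i)) * ta +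
    ((∏ j ∈ Ico i (s i), (a - j)) * (a + 1 - i)) * tb

theorem polP_eq {m n : ℕ} (l q : ℕ → ℕ) {lm : ℕ} {x y : ℚ} (hy : x + lm = y + m) :
    polP m n l q lm x = constC m n l q * polB m n y * shiftedProd l m (y + m) (y + n + 2) *
      shiftedProd q n (y + n + 1) (y + m + 1) := by
  simp only [polP, shiftedProd, hy, add_sub_cancel_right]
  congr 1
  · congr 1
    exact prod_congr rfl fun i _ => prod_congr rfl fun j _ => by ring
  · exact prod_congr rfl fun i _ => prod_congr rfl fun j _ => by ring

theorem polP_add_one_mul {m n : ℕ} {l q : ℕ → ℕ} {lm y : ℕ} {x : ℚ}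
    (hli : ∀ i, 1 ≤ i → i ≤ m → i ≤ l i) (hqi : ∀ i, 1 ≤ i → i ≤ n → i ≤ q i)
    (hy : x + lm = y + m) :
    polP m n l q lm (x + 1) * (2 * y + m + n + 2)! * (2 * y + m + n + 3)! *
        (∏ i ∈ Icc 1 m, ((y : ℚ) + m + 1 - l i)) * ∏ i ∈ Icc 1 n, ((y : ℚ) + n + 2 - q i) =
      polP m n l q lm x * (2 * y + 2 * m + 2)! * (2 * y + 2 * n + 3)! *
        (∏ i ∈ Icc 1 m, ((y : ℚ) + n + 2 + l i)) * ∏ i ∈ Icc 1 n, ((y : ℚ) + m + 1 + q i) := by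
  rw [polP_eq l q hy, polP_eq l q (y := y + 1) (by linear_combination hy),
    show (y : ℚ) + 1 + m = y + m + 1 by ring, show (y : ℚ) + 1 + n + 2 = y + n + 2 + 1 by ring,
    show (y : ℚ) + 1 + n + 1 = y + n + 2 by ring]
  have hL := shiftedProd_add_one_mul ((y : ℚ) + m) (y + n + 2) hli
  have hQ := shiftedProd_add_one_mul ((y : ℚ) + n + 1) (y + m + 1) hqi
  rw [prod_Icc_one_add_eq_pochQ, prod_Icc_one_sub_eq_pochQ,
    show (y : ℚ) + m + 1 - m = y + 1 by ring,
    show pochQ ((y : ℚ) + n + 2 + 1) m = pochQ (y + n + 3) m by ring_nf] at hL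
  rw [prod_Icc_one_add_eq_pochQ, prod_Icc_one_sub_eq_pochQ,
    show (y : ℚ) + n + 1 + 1 = y + n + 2 by ring,
    show pochQ ((y : ℚ) + m + 1 + 1) n = pochQ (y + m + 2) n by ring_nf,
    show (y : ℚ) + n + 2 - n = y + 2 by ring] at hQ
  have hV : pochQ (y + n + 3) m * pochQ (y + m + 2) n * pochQ (y + 1) m * pochQ (y + 2) n ≠ 0 := by
    apply_rules [mul_ne_zero, pochQ_ne_zero] <;> positivity
  refine mul_right_cancel₀ hV ?_
  linear_combination congr(constC m n l q * $(polB_add_one_mul_factorial y m n) * $hL * $hQ)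

theorem polP_ratio_general (m n : ℕ) (l q : ℕ → ℕ)
    (hl : ∀ i j, 1 ≤ i → i < j → j ≤ m → l i < l j)
    (hq : ∀ i j, 1 ≤ i → i < j → j ≤ n → q i < q j)
    (hlpos : ∀ i, 1 ≤ i → i ≤ m → 1 ≤ l i)
    (hqpos : ∀ i, 1 ≤ i → i ≤ n → 1 ≤ q i)
    (x : ℕ) :
    polP m n l q (l m) ((x : ℚ) + 1) *
        (Nat.factorial (2 * x + 2 * l m + n + 2 - m) : ℚ) *
        (Nat.factorial (2 * x + 2 * l m + n + 3 - m) : ℚ) *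
        (∏ i ∈ Finset.Icc 1 m, ((x : ℚ) + l m - l i + 1)) *
        (∏ i ∈ Finset.Icc 1 n, ((x : ℚ) + l m - q i - m + n + 2)) =
      polP m n l q (l m) (x : ℚ) *
        (Nat.factorial (2 * x + 2 * l m + 2) : ℚ) *
        (Nat.factorial (2 * x + 2 * l m + 2 * n + 3 - 2 * m) : ℚ) *
        (∏ i ∈ Finset.Icc 1 m, ((x : ℚ) + l m + l i - m + n + 2)) *
        (∏ i ∈ Finset.Icc 1 n, ((x : ℚ) + l m + q i + 1)) := by
  have hli := le_apply_of_strictMonoOn hl hlpos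
  obtain ⟨y, hy⟩ : ∃ y, x + l m = y + m := by
    rcases Nat.eq_zero_or_pos m with rfl | hm
    exacts [⟨x + l 0, rfl⟩, ⟨x + l m - m, by have := hli m hm le_rfl; omega⟩]
  have hyQ : (x : ℚ) + l m = y + m := by exact_mod_cast hy
  rw [show 2 * x + 2 * l m + n + 2 - m = 2 * y + m + n + 2 by omega,
    show 2 * x + 2 * l m + n + 3 - m = 2 * y + m + n + 3 by omega,
    show 2 * x + 2 * l m + 2 = 2 * y + 2 * m + 2 by omega,
    show 2 * x + 2 * l m + 2 * n + 3 - 2 * m = 2 * y + 2 * n + 3 by omega,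
    prod_congr rfl fun i _ => show (x : ℚ) + l m - l i + 1 = y + m + 1 - l i by linarith,
    prod_congr rfl fun i _ => show (x : ℚ) + l m - q i - m + n + 2 = y + n + 2 - q i by linarith,
    prod_congr rfl fun i _ => show (x : ℚ) + l m + l i - m + n + 2 = y + n + 2 + l i by linarith,
    prod_congr rfl fun i _ => show (x : ℚ) + l m + q i + 1 = y + m + 1 + q i by linarith]
  exact polP_add_one_mul hli (le_apply_of_strictMonoOn hq hqpos) hyQ

/-- Lemma 4.6(first part) of the paper, cross-multiplied: the ratio
`P_{𝐥,𝐪}(x+1)/P_{𝐥,𝐪}(x)` equals the explicit product of equation (4.13). -/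
theorem polP_ratio (m n : ℕ) (l q : ℕ → ℕ)
    (hl : ∀ i j, 1 ≤ i → i < j → j ≤ m → l i < l j)
    (hq : ∀ i j, 1 ≤ i → i < j → j ≤ n → q i < q j)
    (hlpos : ∀ i, 1 ≤ i → i ≤ m → 1 ≤ l i)
    (hqpos : ∀ i, 1 ≤ i → i ≤ n → 1 ≤ q i)
    (hl0 : m = 0 → l m = 0)
    (x : ℕ) :
    polP m n l q (l m) ((x : ℚ) + 1) *
        (Nat.factorial (2 * x + 2 * l m + n + 2 - m) : ℚ) *
        (Nat.factorial (2 * x + 2 * l m + n + 3 - m) : ℚ) *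
        (∏ i ∈ Finset.Icc 1 m, ((x : ℚ) + l m - l i + 1)) *
        (∏ i ∈ Finset.Icc 1 n, ((x : ℚ) + l m - q i - m + n + 2)) =
      polP m n l q (l m) (x : ℚ) *
        (Nat.factorial (2 * x + 2 * l m + 2) : ℚ) *
        (Nat.factorial (2 * x + 2 * l m + 2 * n + 3 - 2 * m) : ℚ) *
        (∏ i ∈ Finset.Icc 1 m, ((x : ℚ) + l m + l i - m + n + 2)) *
        (∏ i ∈ Finset.Icc 1 n, ((x : ℚ) + l m + q i + 1)) :=
  polP_ratio_general m n l q hl hq hlpos hqpos x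
end

section
/- For a positive integer r and integers s_1 < ⋯ < s_{2r}, define F_0(r; s_1,…,s_{2r}) := 2^{r^2+2r} / ∏_{i=1}^{r}((i-1)!)^2 · ∏_{1≤i<j≤r}(s_{2j}-s_{2i}) · ∏_{1≤i<j≤r}(s_{2j-1}-s_{2i-1}); for integers s_1 < ⋯ < s_{2r+1}, define F_1(r; s_1,…,s_{2r+1}) := 2^{r^2+3r+1} / (∏_{i=1}^{r}(i-1)! · ∏_{i=1}^{r+1}(i-1)!) · ∏_{1≤i<j≤r}(s_{2j}-s_{2i}) · ∏_{1≤i<j≤r+1}(s_{2j-1}-s_{2i-1}); and for integers s_1 < ⋯ < s_{2r+2}, define F_2(r; s_1,…,s_{2r+2}) := 2^{r^2+4r+3} / (∏_{i=1}^{r}(i-1)! · ∏_{i=1}^{r+2}(i-1)!) · [∏_{1≤i<j≤r+1}(s_{2j}-s_{2i})(s_{2j-1}-s_{2i-1})] · (Σ_{i=1}^{2r+2}(-1)^i s_i). Then for every positive integer m and all integers 1 = t_1 < t_2 < ⋯ < t_{2m+2} = N, the following identity holds: F_1(m+1; t_1,…,t_{2m+2},N+1) · F_1(m; t_2-1,…,t_{2m+2}-1)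 = F_2(m; t_2-1,…,t_{2m+2}-1,N) · F_0(m+1; t_1,…,t_{2m+2}) + F_2(m; t_1,…,t_{2m+2}) · F_0(m+1; t_2-1,…,t_{2m+2}-1,N). -/
/-- `F₀(r; s₁,…,s_{2r})`: the product formula for the number of domino tilings of a
`2r × N` Aztec rectangle with all unit squares of the central row removed except those
labeled `s₁ < ⋯ < s_{2r}`. -/
def kuoF0 (r : ℕ) (s : ℕ → ℤ) : ℚ :=
  2 ^ (r ^ 2 + 2 * r) / (∏ i ∈ Finset.Icc 1 r, ((Nat.factorial (i - 1) : ℚ)) ^ 2) *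
    (∏ i ∈ Finset.Icc 1 r, ∏ j ∈ Finset.Icc (i + 1) r, ((s (2 * j) : ℚ) - s (2 * i))) *
    ∏ i ∈ Finset.Icc 1 r, ∏ j ∈ Finset.Icc (i + 1) r, ((s (2 * j - 1) : ℚ) - s (2 * i - 1))

/-- `F₁(r; s₁,…,s_{2r+1})`: the product formula for the number of domino tilings of a
`(2r+1) × N` Aztec rectangle with all unit squares of the row just below the central row
removed except those labeled `s₁ < ⋯ < s_{2r+1}`. -/
def kuoF1 (r : ℕ) (s : ℕ → ℤ) : ℚ :=
  2 ^ (r ^ 2 + 3 * r + 1) /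
      ((∏ i ∈ Finset.Icc 1 r, (Nat.factorial (i - 1) : ℚ)) *
        ∏ i ∈ Finset.Icc 1 (r + 1), (Nat.factorial (i - 1) : ℚ)) *
    (∏ i ∈ Finset.Icc 1 r, ∏ j ∈ Finset.Icc (i + 1) r, ((s (2 * j) : ℚ) - s (2 * i))) *
    ∏ i ∈ Finset.Icc 1 (r + 1), ∏ j ∈ Finset.Icc (i + 1) (r + 1),
      ((s (2 * j - 1) : ℚ) - s (2 * i - 1))

/-- `F₂(r; s₁,…,s_{2r+2})`: the product formula for the number of domino tilings of a
`(2r+2) × N` Aztec rectangle with all unit squares of the row two below the central row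
removed except those labeled `s₁ < ⋯ < s_{2r+2}`. -/
def kuoF2 (r : ℕ) (s : ℕ → ℤ) : ℚ :=
  2 ^ (r ^ 2 + 4 * r + 3) /
      ((∏ i ∈ Finset.Icc 1 r, (Nat.factorial (i - 1) : ℚ)) *
        ∏ i ∈ Finset.Icc 1 (r + 2), (Nat.factorial (i - 1) : ℚ)) *
    (∏ i ∈ Finset.Icc 1 (r + 1), ∏ j ∈ Finset.Icc (i + 1) (r + 1),
      (((s (2 * j) : ℚ) - s (2 * i)) * ((s (2 * j - 1) : ℚ) - s (2 * i - 1)))) *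
    ∑ i ∈ Finset.Icc 1 (2 * r + 2), (-1 : ℚ) ^ i * s i

/-!
Let `E`, `O` be the Vandermonde products `∏_{i<j} (x_j - x_i)` of the even- and odd-indexed
`t`'s, `O'` that of `t₃, t₅, …, t_{2m+1}`, and `P = ∏_{i ≤ m} (N + 1 - t_{2i+1})`. Each of the six
`F`-values is a power of two over factorials times such factors: shifting all entries by `-1`
does not change a Vandermonde product, and appending a last entry multiplies it by the
differences to that entry. Appending `N + 1` to the odd-indexed `t`'s gives the factor
`(N + 1 - t₁) P = N P`, and the alternating sums in the two `F₂`-values add up to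
`N - t₁ + 1 = N`. So both sides equal `E² O O' P N` times equal prefactors.
-/

open Finset

@[to_additive]
theorem Finset.prod_Icc_succ_eq_mul_prod_shift {M : Type*} [CommMonoid M] (f : ℕ → M)
    {a b : ℕ} (hab : a ≤ b + 1) :
    ∏ i ∈ Icc a (b + 1), f i = f a * ∏ i ∈ Icc a b, f (i + 1) := by
  rw [← Ico_add_one_right_eq_Icc, prod_eq_prod_Ico_succ_bot (by omega),
    ← Ico_add_one_right_eq_Icc, prod_Ico_add']

theorem sum_Icc_neg_one_pow_two_mul_add_one {R : Type*} [CommRing R] (n : ℕ) :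
    ∑ i ∈ Icc 1 (2 * n + 1), (-1 : R) ^ i = -1 := by
  induction n with
  | zero => simp
  | succ n ih =>
    rw [show 2 * (n + 1) + 1 = 2 * n + 1 + 1 + 1 by ring, sum_Icc_succ_top (by omega),
      sum_Icc_succ_top (by omega), ih]
    simp [pow_succ, pow_mul]

theorem sum_Icc_neg_one_pow_mul_shift {R : Type*} [CommRing R] (n : ℕ) (x : ℕ → R) :
    ∑ i ∈ Icc 1 (2 * n + 1), (-1 : R) ^ i * (x (i + 1) - 1) =
      1 - x 1 - ∑ i ∈ Icc 1 (2 * n + 2), (-1 : R) ^ i * x i := by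
  rw [show 2 * n + 2 = 2 * n + 1 + 1 by ring,
    sum_Icc_succ_eq_add_sum_shift (fun i => (-1 : R) ^ i * x i) (by omega)]
  simp only [pow_succ, mul_sub, mul_one, sum_sub_distrib, sum_Icc_neg_one_pow_two_mul_add_one,
    mul_neg, neg_mul, sum_neg_distrib, pow_zero]
  ring

section Vandermonde

variable {R : Type*} [CommRing R]

def vandermondeProd (r : ℕ) (x : ℕ → R) : R :=
  ∏ i ∈ Icc 1 r, ∏ j ∈ Icc (i + 1) r, (x j - x i)

theorem vandermondeProd_congr {r : ℕ} {x y : ℕ → R} (h : ∀ i ∈ Icc 1 r, x i = y i) :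
    vandermondeProd r x = vandermondeProd r y :=
  prod_congr rfl fun i hi => prod_congr rfl fun j hj => by
    rw [h i hi, h j (by simp only [mem_Icc] at hi hj ⊢; omega)]

theorem vandermondeProd_sub_const (r : ℕ) (x : ℕ → R) (c : R) :
    vandermondeProd r (fun i => x i - c) = vandermondeProd r x := by
  simp only [vandermondeProd, sub_sub_sub_cancel_right]

theorem vandermondeProd_succ (r : ℕ) (x : ℕ → R) :
    vandermondeProd (r + 1) x = vandermondeProd r x * ∏ i ∈ Icc 1 r, (x (r + 1) - x i) := by
  rw [vandermondeProd, prod_Icc_succ_top (by omega), Icc_eq_empty (by omega : ¬r + 1 + 1 ≤ r + 1),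
    prod_empty, mul_one, vandermondeProd, ← prod_mul_distrib]
  exact prod_congr rfl fun i hi => prod_Icc_succ_top (by simp only [mem_Icc] at hi; omega) _

end Vandermonde

section Formulas

def evens (s : ℕ → ℤ) : ℕ → ℚ := fun i => s (2 * i)

def odds (s : ℕ → ℤ) : ℕ → ℚ := fun i => s (2 * i - 1)

def alternatingSum (n : ℕ) (s : ℕ → ℤ) : ℚ := ∑ i ∈ Icc 1 n, (-1 : ℚ) ^ i * s i

def factorialProd (r : ℕ) : ℚ := ∏ i ∈ Icc 1 r, ((i - 1).factorial : ℚ)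

theorem kuoF0_eq (r : ℕ) (s : ℕ → ℤ) :
    kuoF0 r s = 2 ^ (r ^ 2 + 2 * r) / factorialProd r ^ 2 *
      (vandermondeProd r (evens s) * vandermondeProd r (odds s)) := by
  rw [kuoF0, factorialProd, ← prod_pow, mul_assoc]
  rfl

theorem kuoF1_eq (r : ℕ) (s : ℕ → ℤ) :
    kuoF1 r s = 2 ^ (r ^ 2 + 3 * r + 1) / (factorialProd r * factorialProd (r + 1)) *
      vandermondeProd r (evens s) * vandermondeProd (r + 1) (odds s) :=
  rfl

theorem kuoF2_eq (r : ℕ) (s : ℕ → ℤ) :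
    kuoF2 r s = 2 ^ (r ^ 2 + 4 * r + 3) / (factorialProd r * factorialProd (r + 2)) *
      (vandermondeProd (r + 1) (evens s) * vandermondeProd (r + 1) (odds s)) *
      alternatingSum (2 * r + 2) s := by
  rw [kuoF2, vandermondeProd, vandermondeProd, ← prod_mul_distrib]
  simp only [← prod_mul_distrib]
  rfl

theorem kuo_prefactor_identity (m : ℕ) :
    2 ^ ((m + 1) ^ 2 + 3 * (m + 1) + 1) / (factorialProd (m + 1) * factorialProd (m + 1 + 1)) *
        (2 ^ (m ^ 2 + 3 * m + 1) / (factorialProd m * factorialProd (m + 1))) =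
      2 ^ (m ^ 2 + 4 * m + 3) / (factorialProd m * factorialProd (m + 2)) *
        (2 ^ ((m + 1) ^ 2 + 2 * (m + 1)) / factorialProd (m + 1) ^ 2) := by
  rw [div_mul_div_comm, div_mul_div_comm, ← pow_add, ← pow_add,
    show (m + 1) ^ 2 + 3 * (m + 1) + 1 + (m ^ 2 + 3 * m + 1) =
      m ^ 2 + 4 * m + 3 + ((m + 1) ^ 2 + 2 * (m + 1)) by ring]
  ring

end Formulas

section Condensation

variable (m : ℕ) (N : ℤ) (t : ℕ → ℤ)

theorem evens_append : evens (fun i => if i = 2 * m + 3 then N + 1 else t i) = evens t := by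
  funext i
  simp only [evens]
  rw [if_neg (by omega)]

theorem vandermondeProd_odds_append (h1 : t 1 = 1) :
    vandermondeProd (m + 1 + 1) (odds fun i => if i = 2 * m + 3 then N + 1 else t i) =
      vandermondeProd (m + 1) (odds t) * (N * ∏ i ∈ Icc 1 m, ((N : ℚ) + 1 - t (2 * i + 1))) := by
  have hlow : ∀ i ∈ Icc 1 (m + 1),
      odds (fun i => if i = 2 * m + 3 then N + 1 else t i) i = odds t i := by
    intro i hi
    simp only [odds, mem_Icc] at hi ⊢
    rw [if_neg (by omega)]
  have htop : odds (fun i => if i = 2 * m + 3 then N + 1 else t i) (m + 1 + 1) = N + 1 := by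
    simp only [odds]
    rw [if_pos (by omega)]
    push_cast
    rfl
  rw [vandermondeProd_succ, vandermondeProd_congr hlow,
    prod_congr rfl fun i hi => by rw [hlow i hi, htop], prod_Icc_succ_eq_mul_prod_shift _ (by omega)]
  simp [odds, h1, mul_add]

theorem vandermondeProd_evens_shift (r : ℕ) :
    vandermondeProd r (evens fun i => t (i + 1) - 1) =
      vandermondeProd r (fun i => (t (2 * i + 1) : ℚ)) := by
  unfold evens
  push_cast
  exact vandermondeProd_sub_const _ _ _

theorem vandermondeProd_odds_shift (r : ℕ) :
    vandermondeProd r (odds fun i => t (i + 1) - 1) = vandermondeProd r (evens t) := by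
  rw [← vandermondeProd_sub_const r (evens t) 1]
  refine vandermondeProd_congr fun i hi => ?_
  simp only [mem_Icc] at hi
  simp [odds, evens, show 2 * i - 1 + 1 = 2 * i by omega]

theorem vandermondeProd_evens_shift_append :
    vandermondeProd (m + 1) (evens fun i => if i = 2 * m + 2 then N else t (i + 1) - 1) =
      vandermondeProd m (fun i => (t (2 * i + 1) : ℚ)) *
        ∏ i ∈ Icc 1 m, ((N : ℚ) + 1 - t (2 * i + 1)) := by
  have hlow : ∀ i ∈ Icc 1 m, evens (fun i => if i = 2 * m + 2 then N else t (i + 1) - 1) i =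
      evens (fun i => t (i + 1) - 1) i := by
    intro i hi
    simp only [evens, mem_Icc] at hi ⊢
    rw [if_neg (by omega)]
  rw [vandermondeProd_succ, vandermondeProd_congr hlow, vandermondeProd_evens_shift]
  refine congrArg _ (prod_congr rfl fun i hi => ?_)
  simp only [mem_Icc] at hi
  simp only [evens]
  rw [if_pos (by ring), if_neg (by omega)]
  push_cast
  ring

theorem odds_shift_append :
    odds (fun i => if i = 2 * m + 2 then N else t (i + 1) - 1) = odds fun i => t (i + 1) - 1 := by
  funext i
  simp only [odds]
  rw [if_neg (by omega)]

theorem alternatingSum_shift_append (h1 : t 1 = 1) :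
    alternatingSum (2 * m + 2) (fun i => if i = 2 * m + 2 then N else t (i + 1) - 1) =
      N - alternatingSum (2 * m + 2) t := by
  have hlow : ∀ i ∈ Icc 1 (2 * m + 1),
      (-1 : ℚ) ^ i * ((if i = 2 * m + 2 then N else t (i + 1) - 1 : ℤ) : ℚ) =
        (-1 : ℚ) ^ i * ((t (i + 1) : ℚ) - 1) := by
    intro i hi
    simp only [mem_Icc] at hi
    rw [if_neg (by omega)]
    push_cast
    rfl
  rw [alternatingSum, sum_Icc_succ_top (by omega), sum_congr rfl hlow,
    sum_Icc_neg_one_pow_mul_shift m fun i => (t i : ℚ), if_pos rfl, alternatingSum, h1,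
    Even.neg_one_pow ⟨m + 1, by ring⟩]
  push_cast
  ring

end Condensation

theorem kuo_condensation_identity_general (m : ℕ) (N : ℤ) (t : ℕ → ℤ)
    (h1 : t 1 = 1) :
    kuoF1 (m + 1) (fun i => if i = 2 * m + 3 then N + 1 else t i) *
        kuoF1 m (fun i => t (i + 1) - 1) =
      kuoF2 m (fun i => if i = 2 * m + 2 then N else t (i + 1) - 1) *
          kuoF0 (m + 1) t +
        kuoF2 m t *
          kuoF0 (m + 1) (fun i => if i = 2 * m + 2 then N else t (i + 1) - 1) := by
  rw [kuoF1_eq, kuoF1_eq, kuoF2_eq, kuoF2_eq, kuoF0_eq, kuoF0_eq, evens_append,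
    vandermondeProd_odds_append m N t h1, vandermondeProd_evens_shift,
    vandermondeProd_odds_shift, vandermondeProd_evens_shift_append,
    odds_shift_append, vandermondeProd_odds_shift,
    alternatingSum_shift_append m N t h1]
  -- both sides are `E² O O' P N` times the two sides of the prefactor identity
  linear_combination (vandermondeProd (m + 1) (evens t) ^ 2 * vandermondeProd (m + 1) (odds t) *
    vandermondeProd m (fun i => (t (2 * i + 1) : ℚ)) *
    ∏ i ∈ Icc 1 m, ((N : ℚ) + 1 - t (2 * i + 1)) * N) * kuo_prefactor_identity m

/-- The Kuo graphical-condensation recurrence satisfied by the product formulas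
`F₀`, `F₁`, `F₂`, for all `1 = t₁ < t₂ < ⋯ < t_{2m+2} = N`:
`F₁(m+1; t₁,…,t_{2m+2},N+1)·F₁(m; t₂-1,…,t_{2m+2}-1)
  = F₂(m; t₂-1,…,t_{2m+2}-1,N)·F₀(m+1; t₁,…,t_{2m+2})
    + F₂(m; t₁,…,t_{2m+2})·F₀(m+1; t₂-1,…,t_{2m+2}-1,N)`. -/
theorem kuo_condensation_identity (m : ℕ) (hm : 1 ≤ m) (N : ℤ) (t : ℕ → ℤ)
    (hmono : ∀ i j, 1 ≤ i → i < j → j ≤ 2 * m + 2 → t i < t j)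
    (h1 : t 1 = 1) (hN : t (2 * m + 2) = N) :
    kuoF1 (m + 1) (fun i => if i = 2 * m + 3 then N + 1 else t i) *
        kuoF1 m (fun i => t (i + 1) - 1) =
      kuoF2 m (fun i => if i = 2 * m + 2 then N else t (i + 1) - 1) *
          kuoF0 (m + 1) t +
        kuoF2 m t *
          kuoF0 (m + 1) (fun i => if i = 2 * m + 2 then N else t (i + 1) - 1) :=
  kuo_condensation_identity_general m N t h1
end
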